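/- arXiv:1703.04193 — 4 statements merged into one kernel-verified Lean document; each statement's English description precedes it below -/
import Mathlib

section
/- Let F ∈ (Z/2)[[x]] be the power series F = Σ_{k≥0} x^{(2k+1)^2} (the sum of x^n over odd squares n), and let G = F(x^3) (the series obtained by substituting x^3 for x). Then (F+G)^4 = F·G in (Z/2)[[x]]. -/
/-!
Over `ZMod 2` squaring is the Frobenius, so `(F + G)^4 = F(x^4) + F(x^12)`. The coefficient of
`x^n` in `F G` is the parity of the number of pairs `(a, b)` of odd naturals with
`a² + 3b² = n`. Multiplying `a + b√-3` by a unit `(1 ± √-3)/2` of the Eisenstein integers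
pairs these solutions off, except for the fixed points `a = b` and `a = 3b`, which account for
the terms `x^{4b²}` of `F(x^4)` and `x^{12b²}` of `F(x^12)`.
-/

open scoped Classical

/-- `F = Σ x^{(2k+1)^2}`, the sum over odd squares. -/
noncomputable def F : PowerSeries (ZMod 2) :=
  PowerSeries.mk fun n => if ∃ k, n = (2 * k + 1) ^ 2 then 1 else 0

/-- `G = F(x^3)`. -/
noncomputable def G : PowerSeries (ZMod 2) :=
  PowerSeries.mk fun n => if ∃ k, n = 3 * (2 * k + 1) ^ 2 then 1 else 0

open PowerSeries Finset

theorem PowerSeries.expand_zmod_eq_pow {p : ℕ} [Fact p.Prime] (f : PowerSeries (ZMod p)) :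
    expand p (Fact.out : p.Prime).ne_zero f = f ^ p := by
  ext n
  rw [← coeff_coe_trunc_of_lt n.lt_succ_self (f := f ^ p), ← trunc_trunc_pow,
    coeff_coe_trunc_of_lt n.lt_succ_self, ← Polynomial.coe_pow, ← ZMod.expand_card,
    Polynomial.coeff_coe, Polynomial.coeff_expand (Fact.out : p.Prime).pos, coeff_expand]
  split_ifs
  · rw [coeff_trunc, if_pos (Nat.lt_succ_of_le (Nat.div_le_self n p))]
  · rfl

theorem PowerSeries.coeff_mk_ite_mul_mk_ite {R : Type*} [Semiring R] (P Q : ℕ → Prop)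
    [DecidablePred P] [DecidablePred Q] (n : ℕ) :
    coeff n ((mk fun i => if P i then (1 : R) else 0) * mk fun j => if Q j then (1 : R) else 0) =
      #{x ∈ antidiagonal n | P x.1 ∧ Q x.2} := by
  simp only [coeff_mul, coeff_mk, ite_zero_mul_ite_zero, mul_one, sum_boole]

theorem Finset.card_zmod_two_eq_card_fixedPoints {α : Type*} [DecidableEq α] {s : Finset α}
    (f : α → α) (hf_mem : ∀ x ∈ s, f x ∈ s) (hf_invol : ∀ x ∈ s, f (f x) = x) :
    (#s : ZMod 2) = #{x ∈ s | f x = x} := by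
  rw [← card_filter_add_card_filter_not (fun x => f x = x), Nat.cast_add, add_eq_left,
    card_eq_sum_ones, Nat.cast_sum, Nat.cast_one]
  refine sum_involution (fun x _ => f x) (fun _ _ => CharTwo.add_self_eq_zero 1)
    (fun x hx _ => (mem_filter.1 hx).2) (fun x hx => ?_)
    (fun x hx => hf_invol x (mem_filter.1 hx).1)
  obtain ⟨hxs, hfx⟩ := mem_filter.1 hx
  exact mem_filter.2 ⟨hf_mem x hxs, fun h => hfx ((hf_invol x hxs).symm.trans h).symm⟩

theorem exists_eq_mul_odd_sq_iff {m n : ℕ} :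
    (∃ k, n = m * (2 * k + 1) ^ 2) ↔ ∃ b, b % 2 = 1 ∧ n = m * b ^ 2 := by
  constructor
  · rintro ⟨k, rfl⟩
    exact ⟨2 * k + 1, by omega, rfl⟩
  · rintro ⟨b, hb, rfl⟩
    exact ⟨b / 2, by rw [show 2 * (b / 2) + 1 = b by omega]⟩

theorem coeff_expand_F {m : ℕ} (hm : m ≠ 0) (n : ℕ) :
    coeff n (expand m hm F) = if ∃ k, n = m * (2 * k + 1) ^ 2 then 1 else 0 := by
  rw [coeff_expand, F, coeff_mk]
  by_cases hdvd : m ∣ n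
  · obtain ⟨q, rfl⟩ := hdvd
    rw [if_pos (dvd_mul_right m q), Nat.mul_div_cancel_left q (Nat.pos_of_ne_zero hm)]
    exact if_congr ⟨fun ⟨k, hk⟩ => ⟨k, hk ▸ rfl⟩,
      fun ⟨k, hk⟩ => ⟨k, Nat.eq_of_mul_eq_mul_left (Nat.pos_of_ne_zero hm) hk⟩⟩ rfl rfl
  · rw [if_neg hdvd, if_neg]
    rintro ⟨k, rfl⟩
    exact hdvd (dvd_mul_right _ _)

theorem G_eq_expand_F : G = expand 3 three_ne_zero F := by
  ext n
  rw [coeff_expand_F, G, coeff_mk]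

def oddReps (n : ℕ) : Finset (ℕ × ℕ) :=
  {q ∈ range (n + 1) ×ˢ range (n + 1) | q.1 % 2 = 1 ∧ q.2 % 2 = 1 ∧ q.1 ^ 2 + 3 * q.2 ^ 2 = n}

theorem mem_oddReps {n : ℕ} {q : ℕ × ℕ} :
    q ∈ oddReps n ↔ q.1 % 2 = 1 ∧ q.2 % 2 = 1 ∧ q.1 ^ 2 + 3 * q.2 ^ 2 = n := by
  rw [oddReps, mem_filter, mem_product, mem_range, mem_range, and_iff_right_iff_imp]
  rintro ⟨-, -, rfl⟩
  constructor <;> nlinarith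

theorem coeff_F_mul_G (n : ℕ) : coeff n (F * G) = #(oddReps n) := by
  rw [F, G, coeff_mk_ite_mul_mk_ite]
  have hinj : Function.Injective fun q : ℕ × ℕ => (q.1 ^ 2, 3 * q.2 ^ 2) := by
    rintro ⟨a, b⟩ ⟨a', b'⟩ h
    simp only [Prod.mk.injEq] at h ⊢
    exact ⟨Nat.pow_left_injective two_ne_zero h.1,
      Nat.pow_left_injective two_ne_zero (Nat.eq_of_mul_eq_mul_left (by norm_num) h.2)⟩
  rw [← card_image_of_injective (oddReps n) hinj]
  congr 2
  ext ⟨i, j⟩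
  simp only [mem_filter, HasAntidiagonal.mem_antidiagonal, mem_image, mem_oddReps,
    Prod.mk.injEq, Prod.exists]
  constructor
  · rintro ⟨hij, ⟨k, rfl⟩, ⟨l, rfl⟩⟩
    exact ⟨2 * k + 1, 2 * l + 1, ⟨by omega, by omega, hij⟩, rfl, rfl⟩
  · rintro ⟨a, b, ⟨ha, hb, hab⟩, rfl, rfl⟩
    exact ⟨hab, ⟨a / 2, by rw [show 2 * (a / 2) + 1 = a by omega]⟩,
      ⟨b / 2, by rw [show 2 * (b / 2) + 1 = b by omega]⟩⟩

theorem card_filter_oddReps_fst_eq_mul_snd {c : ℕ} (hc : c % 2 = 1) (n : ℕ) :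
    #{q ∈ oddReps n | q.1 = c * q.2} =
      if ∃ k, n = (c ^ 2 + 3) * (2 * k + 1) ^ 2 then 1 else 0 := by
  rw [exists_eq_mul_odd_sq_iff]
  split_ifs with h
  · obtain ⟨b, hb, rfl⟩ := h
    rw [card_eq_one]
    refine ⟨(c * b, b), eq_singleton_iff_unique_mem.2 ⟨?_, ?_⟩⟩
    · rw [mem_filter, mem_oddReps]
      exact ⟨⟨by rw [Nat.mul_mod, hc, hb], hb, by ring⟩, rfl⟩
    · rintro ⟨x, y⟩ hq
      simp only [mem_filter, mem_oddReps] at hq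
      obtain ⟨⟨-, -, hxy⟩, rfl⟩ := hq
      have : y = b := Nat.pow_left_injective two_ne_zero
        (Nat.eq_of_mul_eq_mul_left (by positivity : 0 < c ^ 2 + 3) (by rw [← hxy]; ring))
      rw [this]
  · rw [card_eq_zero, filter_eq_empty_iff]
    rintro ⟨x, y⟩ hq hxy
    simp only [mem_oddReps] at hq hxy
    subst hxy
    exact h ⟨y, hq.2.1, by rw [← hq.2.2]; ring⟩

theorem sq_add_three_mul_sq_of_two_mul_eq_sub {a b x y : ℕ}
    (hx : 2 * x + 3 * b = a ∨ 2 * x + a = 3 * b) (hy : 2 * y = a + b) :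
    x ^ 2 + 3 * y ^ 2 = a ^ 2 + 3 * b ^ 2 := by
  refine Nat.eq_of_mul_eq_mul_left (by norm_num : 0 < 4) ?_
  zify at hx hy ⊢
  rcases hx with hx | hx
  · linear_combination (2 * x + a - 3 * b : ℤ) * hx + 3 * (2 * y + a + b : ℤ) * hy
  · linear_combination (2 * x - a + 3 * b : ℤ) * hx + 3 * (2 * y + a + b : ℤ) * hy

theorem sq_add_three_mul_sq_of_two_mul_eq_add {a b x y : ℕ}
    (hx : 2 * x = a + 3 * b) (hy : 2 * y + b = a ∨ 2 * y + a = b) :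
    x ^ 2 + 3 * y ^ 2 = a ^ 2 + 3 * b ^ 2 := by
  refine Nat.eq_of_mul_eq_mul_left (by norm_num : 0 < 4) ?_
  zify at hx hy ⊢
  rcases hy with hy | hy
  · linear_combination (2 * x + a + 3 * b : ℤ) * hx + 3 * (2 * y + a - b : ℤ) * hy
  · linear_combination (2 * x + a + 3 * b : ℤ) * hx + 3 * (2 * y - a + b : ℤ) * hy

/-- `a + b√-3 ↦ (a + b√-3)(1 ± √-3)/2` with both coordinates taken in absolute value, where the sign
is the one making the new second coordinate `(±a + b)/2` odd (for odd `a, b` exactly one is). -/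
def repInvolution (q : ℕ × ℕ) : ℕ × ℕ :=
  if (q.1 + q.2) / 2 % 2 = 1 then
    (if 3 * q.2 ≤ q.1 then (q.1 - 3 * q.2) / 2 else (3 * q.2 - q.1) / 2, (q.1 + q.2) / 2)
  else ((q.1 + 3 * q.2) / 2, if q.2 ≤ q.1 then (q.1 - q.2) / 2 else (q.2 - q.1) / 2)

theorem repInvolution_repInvolution {q : ℕ × ℕ} (ha : q.1 % 2 = 1) (hb : q.2 % 2 = 1) :
    repInvolution (repInvolution q) = q := by
  obtain ⟨a, b⟩ := q
  simp only [repInvolution]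
  split_ifs <;> simp_all [Prod.ext_iff] <;> omega

theorem repInvolution_eq_self_iff {q : ℕ × ℕ} (ha : q.1 % 2 = 1) (hb : q.2 % 2 = 1) :
    repInvolution q = q ↔ q.1 = 1 * q.2 ∨ q.1 = 3 * q.2 := by
  obtain ⟨a, b⟩ := q
  simp only [repInvolution]
  split_ifs <;> simp_all [Prod.ext_iff] <;> omega

theorem repInvolution_mem_oddReps {n : ℕ} {q : ℕ × ℕ} (hq : q ∈ oddReps n) :
    repInvolution q ∈ oddReps n := by
  obtain ⟨a, b⟩ := q
  rw [mem_oddReps] at hq ⊢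
  obtain ⟨ha, hb, rfl⟩ := hq
  dsimp only at ha hb
  by_cases hc : (a + b) / 2 % 2 = 1
  · rw [repInvolution, if_pos hc]
    exact ⟨by split_ifs <;> omega, hc,
      sq_add_three_mul_sq_of_two_mul_eq_sub (by split_ifs <;> omega) (by omega)⟩
  · rw [repInvolution, if_neg hc]
    exact ⟨by omega, by split_ifs <;> omega,
      sq_add_three_mul_sq_of_two_mul_eq_add (by omega) (by split_ifs <;> omega)⟩

theorem natCast_card_oddReps (n : ℕ) :
    (#(oddReps n) : ZMod 2) =
      (if ∃ k, n = 4 * (2 * k + 1) ^ 2 then 1 else 0) +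
        if ∃ k, n = 12 * (2 * k + 1) ^ 2 then 1 else 0 := by
  have hodd : ∀ q ∈ oddReps n, q.1 % 2 = 1 ∧ q.2 % 2 = 1 := fun q hq =>
    ⟨(mem_oddReps.1 hq).1, (mem_oddReps.1 hq).2.1⟩
  rw [card_zmod_two_eq_card_fixedPoints repInvolution (fun _ => repInvolution_mem_oddReps)
      (fun q hq => repInvolution_repInvolution (hodd q hq).1 (hodd q hq).2),
    filter_congr fun q hq => repInvolution_eq_self_iff (hodd q hq).1 (hodd q hq).2,
    filter_or, card_union_of_disjoint, card_filter_oddReps_fst_eq_mul_snd rfl,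
    card_filter_oddReps_fst_eq_mul_snd rfl]
  · norm_num
  · rw [disjoint_filter]
    intro q hq h1 h3
    have := (hodd q hq).2
    omega

theorem stmt_0 : (F + G) ^ 4 = F * G := by
  have hfrob : (F + G) ^ 4 =
      expand (2 * 2) (by norm_num) F + expand (2 * 2 * 3) (by norm_num) F := by
    rw [G_eq_expand_F, show 4 = 2 * 2 from rfl, pow_mul, ← expand_zmod_eq_pow,
      ← expand_zmod_eq_pow, ← expand_mul, map_add, ← expand_mul]
  ext n
  rw [hfrob, map_add, coeff_expand_F, coeff_expand_F, coeff_F_mul_G, natCast_card_oddReps]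
end

section
/- Let k be a field, and let M be a k[[X,Y]]-module with a k-basis {m_{i,j}} indexed by ℕ×ℕ that is adapted to X and Y, meaning X·m_{i,j} = m_{i−1,j} (and 0 if i = 0) and Y·m_{i,j} = m_{i,j−1} (and 0 if j = 0). Then for every nonzero u ∈ k[[X,Y]], multiplication by u is surjective on M: uM = M. -/
/-!
Think of `b n` as the inverse monomial `X⁻ⁿ`, so that `M` is Macaulay's inverse system. A power
series acts on `b n` only through its coefficients of exponent `≤ n`: the rest lies in the ideal
generated by the `X s ^ (n s + 1)`, which kills `b n`. If `e` is the lexicographically least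
exponent of `u ≠ 0`, then `u • b (n + e)` is `coeff e u • b n` plus a combination of basis vectors
`b m` with `m` lexicographically smaller than `n`, so well-founded induction on the lexicographic
order puts every `b n`, hence all of `M`, in `u • M`.
-/

open MvPowerSeries

namespace MvPowerSeries

theorem mem_support_trunc'_iff {σ R : Type*} [DecidableEq σ] [CommSemiring R]
    {n d : σ →₀ ℕ} {u : MvPowerSeries σ R} :
    d ∈ (trunc' R n u).support ↔ d ≤ n ∧ coeff d u ≠ 0 := by
  simp [MvPolynomial.mem_support_iff, coeff_trunc']

section Adapted

variable {σ M : Type*} (R : Type*) [CommRing R] [AddCommGroup M] [Module (MvPowerSeries σ R) M]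

def IsAdapted (b : (σ →₀ ℕ) → M) : Prop :=
  ∀ s n, (X s : MvPowerSeries σ R) • b n = if n s = 0 then 0 else b (n - Finsupp.single s 1)

variable {R} {b : (σ →₀ ℕ) → M}

theorem IsAdapted.X_pow_smul (hb : IsAdapted R b) (s : σ) (a : ℕ) (n : σ →₀ ℕ) :
    (X s : MvPowerSeries σ R) ^ a • b n =
      if a ≤ n s then b (n - Finsupp.single s a) else 0 := by
  induction a generalizing n with
  | zero => simp
  | succ a ih =>
    rw [pow_succ, mul_smul, hb]
    split_ifs with h0 h1 h1
    · omega
    · exact smul_zero _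
    · rw [ih, if_pos (by simp; omega), tsub_tsub, ← Finsupp.single_add, add_comm]
    · rw [ih, if_neg (by simp; omega)]

theorem IsAdapted.monomial_smul [Module R M] [IsScalarTower R (MvPowerSeries σ R) M]
    (hb : IsAdapted R b) (e : σ →₀ ℕ) (c : R) (n : σ →₀ ℕ) :
    monomial e c • b n = if e ≤ n then c • b (n - e) else 0 := by
  suffices h : ∀ n, monomial e (1 : R) • b n = if e ≤ n then b (n - e) else 0 by
    rw [← mul_one c, ← smul_eq_mul, map_smul, smul_assoc, h]
    split_ifs <;> simp
  induction e using Finsupp.induction_linear with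
  | zero => simp
  | add f g hf hg =>
    intro n
    rw [← mul_one (1 : R), ← monomial_mul_monomial, mul_smul, hg]
    by_cases hgn : g ≤ n
    · simp only [if_pos hgn, hf, tsub_tsub, add_comm g, le_tsub_iff_right hgn]
    · rw [if_neg hgn, if_neg fun h => hgn (le_trans le_add_self h), smul_zero]
  | single s a =>
    intro n
    simp only [← X_pow_eq, hb.X_pow_smul, Finsupp.single_le_iff]

theorem IsAdapted.smul_eq_zero_of_coeff_eq_zero_on_finset (hb : IsAdapted R b) (S : Finset σ)
    {f : MvPowerSeries σ R} {n : σ →₀ ℕ} (hf : ∀ d, (∀ s ∈ S, d s ≤ n s) → coeff d f = 0) :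
    f • b n = 0 := by
  classical
  induction S using Finset.induction_on generalizing f with
  | empty =>
    rw [show f = 0 from ext fun d => hf d (by simp), zero_smul]
  | insert s S _ ih =>
    let high : MvPowerSeries σ R := fun d => if n s < d s then coeff d f else 0
    obtain ⟨g, hg⟩ : X s ^ (n s + 1) ∣ high := X_pow_dvd_iff.2 fun d hd => if_neg (by omega)
    have hlow : (f - high) • b n = 0 := ih fun d hd => by
      change coeff d f - (if n s < d s then coeff d f else 0) = 0
      split_ifs with h
      · exact sub_self _
      · exact (sub_zero _).trans (hf d (Finset.forall_mem_insert _ _ _ |>.2 ⟨by omega, hd⟩))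
    calc f • b n = (f - high) • b n + high • b n := by rw [← add_smul, sub_add_cancel]
      _ = 0 := by
        rw [hlow, hg, mul_comm, mul_smul, hb.X_pow_smul, if_neg (by omega), smul_zero, add_zero]

theorem IsAdapted.smul_eq_zero_of_coeff_eq_zero [Finite σ] (hb : IsAdapted R b)
    {f : MvPowerSeries σ R} {n : σ →₀ ℕ} (hf : ∀ d ≤ n, coeff d f = 0) : f • b n = 0 := by
  cases nonempty_fintype σ
  exact hb.smul_eq_zero_of_coeff_eq_zero_on_finset Finset.univ fun d hd =>
    hf d fun s => hd s (Finset.mem_univ s)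

theorem IsAdapted.smul_eq_sum [Finite σ] [DecidableEq σ] [Module R M]
    [IsScalarTower R (MvPowerSeries σ R) M] (hb : IsAdapted R b) (u : MvPowerSeries σ R)
    (n : σ →₀ ℕ) :
    u • b n = ∑ d ∈ (trunc' R n u).support, coeff d u • b (n - d) := by
  have hrest : (u - trunc' R n u) • b n = 0 :=
    hb.smul_eq_zero_of_coeff_eq_zero fun d hd => by simp [coeff_trunc', hd]
  have hle : ∀ d ∈ (trunc' R n u).support, d ≤ n := fun d hd => (mem_support_trunc'_iff.1 hd).1
  have htrunc : ((trunc' R n u : MvPolynomial σ R) : MvPowerSeries σ R) =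
      ∑ d ∈ (trunc' R n u).support, monomial d (coeff d u) := by
    conv_lhs => rw [MvPolynomial.as_sum (trunc' R n u)]
    rw [← MvPolynomial.coeToMvPowerSeries.ringHom_apply, map_sum]
    refine Finset.sum_congr rfl fun d hd => ?_
    simp [coeff_trunc', hle d hd]
  calc u • b n = (u - trunc' R n u) • b n + (trunc' R n u : MvPowerSeries σ R) • b n := by
        rw [← add_smul, sub_add_cancel]
    _ = _ := by
      rw [hrest, zero_add, htrunc, Finset.sum_smul]
      exact Finset.sum_congr rfl fun d hd => by rw [hb.monomial_smul, if_pos (hle d hd)]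

theorem IsAdapted.smul_add_lexOrder_sub_mem_span [Finite σ] [LinearOrder σ] [Module R M]
    [IsScalarTower R (MvPowerSeries σ R) M] (hb : IsAdapted R b) {u : MvPowerSeries σ R}
    {e : σ →₀ ℕ} (he : lexOrder u = toLex e) (n : σ →₀ ℕ) :
    u • b (n + e) - coeff e u • b n ∈ Submodule.span R (b '' {m | toLex m < toLex n}) := by
  classical
  have he_mem : e ∈ (trunc' R (n + e) u).support :=
    mem_support_trunc'_iff.2 ⟨le_add_self, coeff_ne_zero_of_lexOrder he.symm⟩
  rw [hb.smul_eq_sum, ← Finset.sum_erase_add _ _ he_mem, add_tsub_cancel_right,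
    add_sub_cancel_right]
  refine Submodule.sum_mem _ fun d hd => Submodule.smul_mem _ _ (Submodule.subset_span ⟨_, ?_, rfl⟩)
  obtain ⟨hde, hd⟩ := Finset.mem_erase.1 hd
  obtain ⟨hdn, hcoeff⟩ := mem_support_trunc'_iff.1 hd
  have hed : toLex e < toLex d :=
    lt_of_le_of_ne (WithTop.coe_le_coe.1 (he ▸ lexOrder_le_of_coeff_ne_zero hcoeff))
      (toLex.injective.ne (Ne.symm hde))
  have hsum : toLex (n + e - d) + toLex d = toLex n + toLex e := by
    rw [← toLex_add, ← toLex_add, tsub_add_cancel_of_le hdn]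
  refine lt_of_add_lt_add_right (a := toLex d) ?_
  rw [hsum]
  exact (add_lt_add_iff_left _).2 hed

end Adapted

theorem IsAdapted.surjective_smul {σ k M : Type*} [Finite σ] [LinearOrder σ] [Field k]
    [AddCommGroup M] [Module (MvPowerSeries σ k) M] [Module k M]
    [IsScalarTower k (MvPowerSeries σ k) M] {b : Module.Basis (σ →₀ ℕ) k M}
    (hb : IsAdapted k ⇑b) {u : MvPowerSeries σ k} (hu : u ≠ 0) :
    Function.Surjective fun m : M => u • m := by
  obtain ⟨e, he⟩ := exists_finsupp_eq_lexOrder_of_ne_zero hu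
  have hc : coeff e u ≠ 0 := coeff_ne_zero_of_lexOrder he.symm
  let L : M →ₗ[k] M := DistribSMul.toLinearMap k M u
  have hbL (l : Lex (σ →₀ ℕ)) : b (ofLex l) ∈ LinearMap.range L := by
    induction l using WellFoundedLT.induction with
    | _ l ih =>
    have hspan : Submodule.span k (b '' {m | toLex m < l}) ≤ LinearMap.range L :=
      Submodule.span_le.2 (by rintro _ ⟨m, hm, rfl⟩; exact ih _ hm)
    have hcb : coeff e u • b (ofLex l) ∈ LinearMap.range L := by
      have hmem : u • b (ofLex l + e) ∈ LinearMap.range L := ⟨b (ofLex l + e), rfl⟩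
      simpa using sub_mem hmem (hspan (hb.smul_add_lexOrder_sub_mem_span he (ofLex l)))
    simpa [hc] using (LinearMap.range L).smul_mem (coeff e u)⁻¹ hcb
  refine (LinearMap.range_eq_top (f := L)).1 (eq_top_iff.2 ?_)
  rw [← b.span_eq, Submodule.span_le]
  exact Set.range_subset_iff.2 fun n => hbL (toLex n)

end MvPowerSeries

theorem stmt_4 (k : Type*) [Field k] (M : Type*) [AddCommGroup M]
    [Module (MvPowerSeries (Fin 2) k) M] [Module k M]
    [IsScalarTower k (MvPowerSeries (Fin 2) k) M]
    (b : Module.Basis (ℕ × ℕ) k M)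
    (hX : ∀ i j : ℕ, (X 0 : MvPowerSeries (Fin 2) k) • b (i, j) =
      if i = 0 then 0 else b (i - 1, j))
    (hY : ∀ i j : ℕ, (X 1 : MvPowerSeries (Fin 2) k) • b (i, j) =
      if j = 0 then 0 else b (i, j - 1))
    (u : MvPowerSeries (Fin 2) k) (hu : u ≠ 0) :
    ∀ m : M, ∃ m' : M, u • m' = m := by
  let b' := b.reindex (Finsupp.equivFunOnFinite.trans (finTwoArrowEquiv ℕ)).symm
  have hb' : IsAdapted k ⇑b' := by
    intro s n
    fin_cases s <;> simp [b', hX, hY]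
  exact hb'.surjective_smul hu
end

section
/- Define U_3 : (Z/2)[[x]] → (Z/2)[[x]] by U_3(Σ c_n x^n) = Σ c_{3n} x^n, and for an odd prime p ≠ 3 define T_p(Σ c_n x^n) = Σ c_{pn} x^n + Σ c_n x^{pn}. Let V' ⊂ (Z/2)[[x]] be the span of G^k for k odd, where G = F(x^3) and F = Σ x^{(2k+1)^2}, and let V be the span of F^k for k odd. Then U_3 maps V' bijectively onto V, and U_3 ∘ T_p = T_p ∘ U_3 on V' for every odd prime p ≠ 3. -/
open scoped Classical

/-- The formal Hecke operator `T_p`. -/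
noncomputable def T (p : ℕ) (f : PowerSeries (ZMod 2)) : PowerSeries (ZMod 2) :=
  PowerSeries.mk fun n =>
    PowerSeries.coeff (p * n) f +
      if p ∣ n then PowerSeries.coeff (n / p) f else 0

/-- `U_3 : Σ c_n x^n ↦ Σ c_{3n} x^n`. -/
noncomputable def U3 (f : PowerSeries (ZMod 2)) : PowerSeries (ZMod 2) :=
  PowerSeries.mk fun n => PowerSeries.coeff (3 * n) f

/-- `V` is the span of the `F^k`, `k` odd. -/
noncomputable def V : Submodule (ZMod 2) (PowerSeries (ZMod 2)) :=
  Submodule.span (ZMod 2) {f | ∃ k, Odd k ∧ f = F ^ k}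

/-- `V'` is the span of the `G^k`, `k` odd. -/
noncomputable def V' : Submodule (ZMod 2) (PowerSeries (ZMod 2)) :=
  Submodule.span (ZMod 2) {f | ∃ k, Odd k ∧ f = G ^ k}

/-!
The substitution `x ↦ x³` (`PowerSeries.expand 3`) is a ring homomorphism sending `F` to `G`,
so it maps `V` onto `V'`, and `U3` is a left inverse of it; hence `U3` is a bijection `V' → V`.
The commutation with `T_p` holds on all of `(ZMod 2)⟦X⟧` as soon as `p` is coprime to `3`,
since then `p ∣ 3n ↔ p ∣ n` and `3n / p = 3 (n / p)`.
-/

open PowerSeries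

lemma coeff_U3 (f : PowerSeries (ZMod 2)) (n : ℕ) : coeff n (U3 f) = coeff (3 * n) f :=
  coeff_mk _ _

lemma U3_expand (f : PowerSeries (ZMod 2)) : U3 (expand 3 three_ne_zero f) = f := by
  ext n
  rw [coeff_U3, coeff_expand_mul]

lemma bijOn_U3_image_expand (s : Set (PowerSeries (ZMod 2))) :
    Set.BijOn U3 (expand 3 three_ne_zero '' s) s := by
  have h : Function.LeftInverse U3 (expand 3 three_ne_zero) := U3_expand
  exact h.injective.bijOn_image.symm
    ⟨h.rightInvOn_range.mono (Set.image_subset_range _ _), h.leftInvOn s⟩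

lemma expand_F : expand 3 three_ne_zero F = G := by
  ext n
  rw [coeff_expand]
  simp only [F, G, coeff_mk]
  split_ifs <;> grind

lemma V'_eq_map_expand : V' = V.map (expand 3 three_ne_zero).toLinearMap := by
  rw [V', V, Submodule.map_span]
  congr
  ext f
  simp [← expand_F, eq_comm (a := f)]

lemma U3_T_comm {p : ℕ} (hp : p.Coprime 3) (f : PowerSeries (ZMod 2)) :
    U3 (T p f) = T p (U3 f) := by
  ext n
  simp only [U3, T, coeff_mk, hp.dvd_mul_left]
  rw [mul_left_comm]
  split_ifs with h
  · rw [Nat.mul_div_assoc 3 h]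
  · rfl

theorem stmt_11 :
    Set.BijOn U3 (V' : Set (PowerSeries (ZMod 2))) (V : Set (PowerSeries (ZMod 2))) ∧
    ∀ p : ℕ, p.Prime → Odd p → p ≠ 3 →
      ∀ f ∈ V', U3 (T p f) = T p (U3 f) := by
  constructor
  · rw [V'_eq_map_expand, Submodule.map_coe]
    exact bijOn_U3_image_expand V
  · intro p hp _ hp3 f _
    exact U3_T_comm ((Nat.coprime_primes hp Nat.prime_three).2 hp3) f
end

section
/- Let O = (Z/2)[[t1,t2,t3,t4]] be a 4-variable power series ring with maximal ideal m, and let A, B, C ∈ m have leading forms (lowest-degree homogeneous parts) that are linearly independent linear forms. Suppose I(V) = (A,B) and I(W) = (A^2,C) as ideals of O. Then I(V) ∩ I(W) = (A^2, AC, BC). -/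
/-!
The leading forms of `A, B, C` are linearly independent linear forms, so after a linear change of
coordinates they are variables; hence they form a regular sequence in the polynomial ring, which is
the associated graded ring of `O`. Lifting homogeneous relations degree by degree, and passing to
the limit in the complete ring `O`, shows that `C` is a nonzerodivisor modulo `(A, B)`. Now if
`x = p A² + q C` lies in `(A, B)`, then so does `q C`, hence `q = u A + v B` and
`x = p A² + u AC + v BC`.
-/

abbrev O : Type := MvPowerSeries (Fin 4) (ZMod 2)

noncomputable def linPart (A : O) : Fin 4 → ZMod 2 :=
  fun i => MvPowerSeries.coeff (R := ZMod 2) (Finsupp.single i 1) A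

theorem Ideal.span_pair_inf_span_pair_eq {R : Type*} [CommRing R] {a b c : R}
    (hc : ∀ q, q * c ∈ Ideal.span {a, b} → q ∈ Ideal.span {a, b}) :
    Ideal.span {a, b} ⊓ Ideal.span {a ^ 2, c} = Ideal.span {a ^ 2, a * c, b * c} := by
  refine le_antisymm (fun x hx => ?_) ?_
  · obtain ⟨hxab, hxc⟩ := Ideal.mem_inf.1 hx
    obtain ⟨p, q, rfl⟩ := Ideal.mem_span_pair.1 hxc
    have hqc : q * c ∈ Ideal.span {a, b} := by
      simpa using sub_mem hxab
        (Ideal.mem_span_pair.2 ⟨p * a, 0, by ring⟩ : p * a ^ 2 ∈ Ideal.span {a, b})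
    obtain ⟨u, v, rfl⟩ := Ideal.mem_span_pair.1 (hc q hqc)
    rw [show p * a ^ 2 + (u * a + v * b) * c = p * a ^ 2 + u * (a * c) + v * (b * c) by ring]
    exact add_mem (add_mem (Ideal.mul_mem_left _ _ (Ideal.subset_span (by simp)))
      (Ideal.mul_mem_left _ _ (Ideal.subset_span (by simp))))
      (Ideal.mul_mem_left _ _ (Ideal.subset_span (by simp)))
  · rw [Ideal.span_le]
    rintro x (rfl | rfl | rfl) <;>
      refine Ideal.mem_inf.2 ⟨Ideal.mem_span_pair.2 ?_, Ideal.mem_span_pair.2 ?_⟩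
    exacts [⟨a, 0, by ring⟩, ⟨1, 0, by ring⟩, ⟨c, 0, by ring⟩, ⟨0, a, by ring⟩,
      ⟨0, c, by ring⟩, ⟨0, b, by ring⟩]

theorem LinearIndependent.exists_basis_comp_eq {K V ι κ : Type*} [Field K] [AddCommGroup V]
    [Module K V] {v : ι → V} (hv : LinearIndependent K v) (b₀ : Module.Basis κ K V) :
    ∃ (b : Module.Basis κ K V) (f : ι → κ), Function.Injective f ∧ ∀ j, b (f j) = v j := by
  let b₁ := Module.Basis.sumExtend hv
  let e := b₁.indexEquiv b₀
  refine ⟨b₁.reindex e, e ∘ Sum.inl, e.injective.comp Sum.inl_injective, fun j => ?_⟩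
  simp [b₁, Module.Basis.sumExtend]
  rfl

theorem Finsupp.degree_eq_one_iff {σ : Type*} {d : σ →₀ ℕ} :
    d.degree = 1 ↔ ∃ i, d = Finsupp.single i 1 := by
  refine ⟨fun hd => ?_, fun ⟨i, hi⟩ => hi ▸ Finsupp.degree_single i 1⟩
  obtain ⟨i, hi⟩ : ∃ i, d i ≠ 0 := by
    by_contra! h
    simp [show d = 0 from Finsupp.ext h] at hd
  have hle : Finsupp.single i 1 ≤ d := Finsupp.single_le_iff.2 (Nat.one_le_iff_ne_zero.2 hi)
  have hrest : (d - Finsupp.single i 1).degree = 0 := by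
    have := congrArg Finsupp.degree (tsub_add_cancel_of_le hle)
    rw [map_add, Finsupp.degree_single, hd] at this
    omega
  refine ⟨i, ?_⟩
  rw [← tsub_add_cancel_of_le hle, (Finsupp.degree_eq_zero_iff _).1 hrest, zero_add]

namespace MvPolynomial

variable {σ R : Type*} [CommSemiring R]

theorem mem_span_X_image_of_mul_X_mem {s : Set σ} {k : σ} (hk : k ∉ s) {p : MvPolynomial σ R}
    (h : p * X k ∈ Ideal.span (X '' s)) : p ∈ Ideal.span (X '' s) := by
  classical
  rw [mem_ideal_span_X_image] at h ⊢
  intro m hm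
  obtain ⟨i, hi, hmi⟩ := h (m + Finsupp.single k 1) (by
    rw [mem_support_iff, coeff_mul_X]; exact mem_support_iff.mp hm)
  have hik : k ≠ i := fun hki => hk (hki ▸ hi)
  exact ⟨i, hi, by simpa [Finsupp.single_apply, hik] using hmi⟩

variable {K : Type*} [Field K] [Fintype σ]

variable (σ K) in
noncomputable def linearForm : (σ → K) →ₗ[K] MvPolynomial σ K :=
  Fintype.linearCombination K X

theorem linearForm_injective : Function.Injective (linearForm σ K) :=
  (linearIndependent_X σ K).fintypeLinearCombination_injective

variable [DecidableEq σ]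

theorem linearForm_single (i : σ) : linearForm σ K (Pi.single i 1) = X i := by
  simp [linearForm]

noncomputable def linearSubst (M : (σ → K) →ₗ[K] σ → K) :
    MvPolynomial σ K →ₐ[K] MvPolynomial σ K :=
  aeval fun i => linearForm σ K (M (Pi.single i 1))

theorem linearSubst_X (M : (σ → K) →ₗ[K] σ → K) (i : σ) :
    linearSubst M (X i) = linearForm σ K (M (Pi.single i 1)) :=
  aeval_X _ i

theorem linearSubst_comp_linearForm (M : (σ → K) →ₗ[K] σ → K) :
    (linearSubst M).toLinearMap ∘ₗ linearForm σ K = linearForm σ K ∘ₗ M := by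
  refine LinearMap.pi_ext fun i c => ?_
  rw [← mul_one c, ← smul_eq_mul, Pi.single_smul']
  simp [linearSubst_X, linearForm_single]

theorem linearSubst_linearForm (M : (σ → K) →ₗ[K] σ → K) (v : σ → K) :
    linearSubst M (linearForm σ K v) = linearForm σ K (M v) :=
  LinearMap.congr_fun (linearSubst_comp_linearForm M) v

theorem linearSubst_comp (M N : (σ → K) →ₗ[K] σ → K) :
    (linearSubst M).comp (linearSubst N) = linearSubst (M ∘ₗ N) :=
  algHom_ext fun i => by
    rw [AlgHom.comp_apply, linearSubst_X, linearSubst_X, linearSubst_linearForm,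
      LinearMap.comp_apply]

theorem linearSubst_id : linearSubst (LinearMap.id : (σ → K) →ₗ[K] σ → K) = AlgHom.id K _ :=
  algHom_ext fun i => by
    rw [linearSubst_X, LinearMap.id_apply, linearForm_single, AlgHom.id_apply]

noncomputable def linearSubstEquiv (e : (σ → K) ≃ₗ[K] σ → K) :
    MvPolynomial σ K ≃ₐ[K] MvPolynomial σ K :=
  AlgEquiv.ofAlgHom (linearSubst e) (linearSubst e.symm)
    (by rw [linearSubst_comp]; simpa using linearSubst_id)
    (by rw [linearSubst_comp]; simpa using linearSubst_id)

theorem mem_span_linearForm_image_of_mul_mem {ι : Type*} {v : ι → σ → K}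
    (hv : LinearIndependent K v) {s : Set ι} {k : ι} (hk : k ∉ s) {p : MvPolynomial σ K}
    (h : p * linearForm σ K (v k) ∈ Ideal.span (linearForm σ K ∘ v '' s)) :
    p ∈ Ideal.span (linearForm σ K ∘ v '' s) := by
  obtain ⟨b, f, hf, hbf⟩ := hv.exists_basis_comp_eq (Pi.basisFun K σ)
  let Φ := linearSubstEquiv b.equivFun.symm
  have hΦ : ∀ j, Φ (X (f j)) = linearForm σ K (v j) := fun j => by
    simp [Φ, linearSubstEquiv, linearSubst_X, hbf]
  have hspan : Ideal.span (linearForm σ K ∘ v '' s) = (Ideal.span (X '' (f '' s))).map Φ := by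
    rw [Ideal.map_span, Set.image_image, Set.image_image]
    simp only [Function.comp_apply, hΦ]
  rw [hspan] at h ⊢
  obtain ⟨q, hq, hqp⟩ := (Ideal.mem_map_of_equiv Φ _).1 h
  have : Φ.symm p * X (f k) ∈ Ideal.span (X '' (f '' s)) := by
    rwa [← Φ.symm_apply_apply (X (f k)), hΦ, ← map_mul, ← hqp, AlgEquiv.symm_apply_apply]
  have hfk : f k ∉ f '' s := fun h => hk (hf.mem_set_image.1 h)
  simpa using Ideal.mem_map_of_mem Φ (mem_span_X_image_of_mul_X_mem hfk this)

theorem exists_eq_mul_of_mul_eq_mul {u w : σ → K} (huw : LinearIndependent K ![u, w])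
    {p q : MvPolynomial σ K} (h : p * linearForm σ K u = q * linearForm σ K w) :
    ∃ r, p = r * linearForm σ K w ∧ q = r * linearForm σ K u := by
  obtain ⟨r, rfl⟩ := Ideal.mem_span_singleton'.1 <| by
    simpa using mem_span_linearForm_image_of_mul_mem huw (s := {0}) (k := 1) (p := q) (by simp)
      (by simpa [← h] using Ideal.mul_mem_left _ p (Ideal.mem_span_singleton_self _))
  have hu : linearForm σ K u ≠ 0 := fun h0 =>
    huw.ne_zero 0 (linearForm_injective (by simpa using h0))
  exact ⟨r, mul_right_cancel₀ hu (by linear_combination h), rfl⟩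

theorem mem_span_pair_of_mul_mem {u w z : σ → K} (huwz : LinearIndependent K ![u, w, z])
    {p : MvPolynomial σ K}
    (h : p * linearForm σ K z ∈ Ideal.span {linearForm σ K u, linearForm σ K w}) :
    p ∈ Ideal.span {linearForm σ K u, linearForm σ K w} := by
  have hs : linearForm σ K ∘ ![u, w, z] '' {0, 1} = {linearForm σ K u, linearForm σ K w} := by
    simp [Set.image_pair]
  rw [← hs] at h ⊢
  exact mem_span_linearForm_image_of_mul_mem huwz (k := 2) (by simp) h

end MvPolynomial

namespace MvPowerSeries

section Order

variable {σ R : Type*} [Ring R]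

theorem le_order_add {f g : MvPowerSeries σ R} {n : ℕ∞} (hf : n ≤ f.order) (hg : n ≤ g.order) :
    n ≤ (f + g).order :=
  le_trans (le_min hf hg) min_order_le_add

theorem le_order_sub {f g : MvPowerSeries σ R} {n : ℕ∞} (hf : n ≤ f.order) (hg : n ≤ g.order) :
    n ≤ (f - g).order := by
  rw [sub_eq_add_neg]
  exact le_order_add hf (by rwa [order_neg])

theorem eq_zero_of_forall_le_order {f : MvPowerSeries σ R} (hf : ∀ n : ℕ, (n : ℕ∞) ≤ f.order) :
    f = 0 := by
  ext d
  exact coeff_of_lt_order (lt_of_lt_of_le (by exact_mod_cast d.degree.lt_succ_self) (hf _))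

theorem IsHomogeneous.le_order {f : MvPowerSeries σ R} {p : ℕ} (hf : f.IsHomogeneous p) :
    (p : ℕ∞) ≤ f.order :=
  MvPowerSeries.le_order fun _ hd => hf.coeff_eq_zero (ne_of_lt (by exact_mod_cast hd))

theorem le_order_sub_homogeneousComponent {f : MvPowerSeries σ R} {p : ℕ}
    (hf : (p : ℕ∞) ≤ f.order) : ((p + 1 : ℕ) : ℕ∞) ≤ (f - homogeneousComponent p f).order := by
  refine le_order fun d hd => ?_
  have hd : d.degree < p + 1 := by exact_mod_cast hd
  rw [map_sub, coeff_homogeneousComponent]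
  split_ifs with hdp
  · exact sub_self _
  · rw [coeff_of_lt_order (lt_of_lt_of_le (by exact_mod_cast (by omega : d.degree < p)) hf),
      sub_zero]

theorem le_order_mul_sub_homogeneousComponent_one {a H : MvPowerSeries σ R}
    (ha : constantCoeff a = 0) {m : ℕ} (hH : ((m - 1 : ℕ) : ℕ∞) ≤ H.order) :
    ((m + 1 : ℕ) : ℕ∞) ≤ (H * (a - homogeneousComponent 1 a)).order := by
  have ha2 := le_order_sub_homogeneousComponent (p := 1)
    (one_le_order_iff_constCoeff_eq_zero.2 ha)
  refine le_trans ?_ (le_trans (add_le_add hH ha2) le_order_mul)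
  exact_mod_cast (by omega : m + 1 ≤ m - 1 + (1 + 1))

theorem homogeneousComponent_add_mul_of_isHomogeneous {f g : MvPowerSeries σ R} {q : ℕ}
    (hg : g.IsHomogeneous q) (p : ℕ) :
    homogeneousComponent (p + q) (f * g) = homogeneousComponent p f * g := by
  classical
  ext d
  rw [coeff_homogeneousComponent, coeff_mul, coeff_mul]
  split_ifs with hd
  · refine Finset.sum_congr rfl fun x hx => ?_
    rw [Finset.HasAntidiagonal.mem_antidiagonal] at hx
    by_cases hx2 : x.2.degree = q
    · rw [coeff_homogeneousComponent, if_pos (by rw [← hx, map_add] at hd; omega)]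
    · rw [hg.coeff_eq_zero hx2, mul_zero, mul_zero]
  · refine (Finset.sum_eq_zero fun x hx => ?_).symm
    rw [Finset.HasAntidiagonal.mem_antidiagonal] at hx
    by_cases hx2 : x.2.degree = q
    · rw [coeff_homogeneousComponent, if_neg (by rw [← hx, map_add] at hd; omega), zero_mul]
    · rw [hg.coeff_eq_zero hx2, mul_zero]

theorem exists_forall_le_order_sub {x : ℕ → MvPowerSeries σ R}
    (hx : ∀ n : ℕ, (n : ℕ∞) ≤ (x (n + 1) - x n).order) :
    ∃ y, ∀ n : ℕ, (n : ℕ∞) ≤ (y - x n).order := by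
  have hcauchy : ∀ n k : ℕ, (n : ℕ∞) ≤ (x (n + k) - x n).order := by
    intro n k
    induction k with
    | zero => simp
    | succ k ih =>
      rw [← add_assoc, ← sub_add_sub_cancel _ (x (n + k))]
      exact le_order_add (le_trans (by exact_mod_cast n.le_add_right k) (hx _)) ih
  let y : MvPowerSeries σ R := fun d => coeff d (x (d.degree + 1))
  refine ⟨y, fun n => le_order fun d hd => ?_⟩
  obtain ⟨k, rfl⟩ : ∃ k, n = d.degree + 1 + k :=
    Nat.exists_eq_add_of_le (by exact_mod_cast Order.add_one_le_of_lt hd)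
  have := coeff_of_lt_order
    (lt_of_lt_of_le (by exact_mod_cast d.degree.lt_succ_self) (hcauchy _ k))
  rw [map_sub, sub_eq_zero] at this ⊢
  exact this.symm

end Order

theorem IsHomogeneous.exists_coe_eq {σ R : Type*} [CommSemiring R] [Finite σ]
    {f : MvPowerSeries σ R} {p : ℕ} (hf : f.IsHomogeneous p) :
    ∃ q : MvPolynomial σ R, (q : MvPowerSeries σ R) = f := by
  refine ⟨truncTotal (p + 1) f, ext fun d => ?_⟩
  rw [MvPolynomial.coeff_coe, coeff_truncTotal_eq_ite]
  split_ifs with hd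
  · rfl
  · exact (hf.coeff_eq_zero (by omega)).symm

variable {σ K : Type*} [Field K] [Fintype σ]

noncomputable def linearCoeffs (f : MvPowerSeries σ K) : σ → K :=
  fun i => coeff (Finsupp.single i 1) f

variable [DecidableEq σ]

open MvPolynomial (linearForm)

theorem homogeneousComponent_one_eq (f : MvPowerSeries σ K) :
    homogeneousComponent 1 f = (linearForm σ K (linearCoeffs f) : MvPowerSeries σ K) := by
  ext d
  rw [coeff_homogeneousComponent, MvPolynomial.coeff_coe]
  simp only [linearForm, Fintype.linearCombination_apply, MvPolynomial.coeff_sum,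
    MvPolynomial.coeff_smul, MvPolynomial.coeff_X, smul_eq_mul, mul_ite, mul_one, mul_zero]
  split_ifs with hd
  · obtain ⟨i, rfl⟩ := Finsupp.degree_eq_one_iff.1 hd
    simp [linearCoeffs, Finsupp.single_left_inj]
  · refine (Finset.sum_eq_zero fun i _ => if_neg fun h => hd ?_).symm
    rw [← h, Finsupp.degree_single]

variable {a b c : MvPowerSeries σ K}

theorem exists_eq_mul_of_mul_eq_mul
    (hab : LinearIndependent K ![linearCoeffs a, linearCoeffs b]) {m : ℕ}
    {F G : MvPowerSeries σ K} (hF : F.IsHomogeneous m) (hG : G.IsHomogeneous m)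
    (h : F * homogeneousComponent 1 a = G * homogeneousComponent 1 b) :
    ∃ H : MvPowerSeries σ K, ((m - 1 : ℕ) : ℕ∞) ≤ H.order ∧
      F = H * homogeneousComponent 1 b ∧ G = H * homogeneousComponent 1 a := by
  obtain ⟨p, rfl⟩ := hF.exists_coe_eq
  obtain ⟨q, rfl⟩ := hG.exists_coe_eq
  rw [homogeneousComponent_one_eq, homogeneousComponent_one_eq] at h
  obtain ⟨r, hp, hq⟩ := MvPolynomial.exists_eq_mul_of_mul_eq_mul hab
    (MvPolynomial.coe_injective σ K (by simpa using h))
  replace hp : (p : MvPowerSeries σ K) = r * homogeneousComponent 1 b := by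
    rw [hp, homogeneousComponent_one_eq, MvPolynomial.coe_mul]
  replace hq : (q : MvPowerSeries σ K) = r * homogeneousComponent 1 a := by
    rw [hq, homogeneousComponent_one_eq, MvPolynomial.coe_mul]
  rcases m with _ | k
  · exact ⟨r, by simp, hp, hq⟩
  refine ⟨homogeneousComponent k r,
    IsHomogeneous.le_order (isHomogeneous_homogeneousComponent _ k), ?_, ?_⟩
  · rw [isHomogeneous_iff_eq_homogeneousComponent.1 hF, hp,
      homogeneousComponent_add_mul_of_isHomogeneous (isHomogeneous_homogeneousComponent b 1)]
  · rw [isHomogeneous_iff_eq_homogeneousComponent.1 hG, hq,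
      homogeneousComponent_add_mul_of_isHomogeneous (isHomogeneous_homogeneousComponent a 1)]

theorem exists_eq_mul_add_mul_of_mul_eq
    (habc : LinearIndependent K ![linearCoeffs a, linearCoeffs b, linearCoeffs c]) {m : ℕ}
    {R F G : MvPowerSeries σ K} (hR : R.IsHomogeneous m) (hF : F.IsHomogeneous m)
    (hG : G.IsHomogeneous m)
    (h : R * homogeneousComponent 1 c =
      F * homogeneousComponent 1 a + G * homogeneousComponent 1 b) :
    ∃ U V : MvPowerSeries σ K, ((m - 1 : ℕ) : ℕ∞) ≤ U.order ∧ ((m - 1 : ℕ) : ℕ∞) ≤ V.order ∧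
      R = U * homogeneousComponent 1 a + V * homogeneousComponent 1 b := by
  obtain ⟨r, rfl⟩ := hR.exists_coe_eq
  obtain ⟨f, rfl⟩ := hF.exists_coe_eq
  obtain ⟨g, rfl⟩ := hG.exists_coe_eq
  simp only [homogeneousComponent_one_eq] at h
  have hpoly : r * linearForm σ K (linearCoeffs c) =
      f * linearForm σ K (linearCoeffs a) + g * linearForm σ K (linearCoeffs b) :=
    MvPolynomial.coe_injective σ K (by simpa using h)
  have hmem := MvPolynomial.mem_span_pair_of_mul_mem habc (p := r) <| by
    rw [hpoly]
    exact Ideal.add_mem _ (Ideal.mul_mem_left _ _ (Ideal.subset_span (by simp)))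
      (Ideal.mul_mem_left _ _ (Ideal.subset_span (by simp)))
  obtain ⟨u, v, huv⟩ := Ideal.mem_span_pair.1 hmem
  replace huv : (r : MvPowerSeries σ K) =
      u * homogeneousComponent 1 a + v * homogeneousComponent 1 b := by
    rw [← huv, homogeneousComponent_one_eq, homogeneousComponent_one_eq]
    simp
  rcases m with _ | k
  · exact ⟨u, v, by simp, by simp, huv⟩
  refine ⟨homogeneousComponent k u, homogeneousComponent k v,
    IsHomogeneous.le_order (isHomogeneous_homogeneousComponent _ k),
    IsHomogeneous.le_order (isHomogeneous_homogeneousComponent _ k), ?_⟩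
  rw [isHomogeneous_iff_eq_homogeneousComponent.1 hR, huv, map_add,
    homogeneousComponent_add_mul_of_isHomogeneous (isHomogeneous_homogeneousComponent a 1),
    homogeneousComponent_add_mul_of_isHomogeneous (isHomogeneous_homogeneousComponent b 1)]

theorem exists_mul_add_mul_eq_succ_le_order
    (hab : LinearIndependent K ![linearCoeffs a, linearCoeffs b])
    (ha : constantCoeff a = 0) (hb : constantCoeff b = 0) {m : ℕ} {f g : MvPowerSeries σ K}
    (hf : (m : ℕ∞) ≤ f.order) (hg : (m : ℕ∞) ≤ g.order)
    (hfg : ((m + 2 : ℕ) : ℕ∞) ≤ (f * a + g * b).order) :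
    ∃ f' g' : MvPowerSeries σ K, f' * a + g' * b = f * a + g * b ∧
      ((m + 1 : ℕ) : ℕ∞) ≤ f'.order ∧ ((m + 1 : ℕ) : ℕ∞) ≤ g'.order := by
  have hin : homogeneousComponent m f * homogeneousComponent 1 a =
      homogeneousComponent m (-g) * homogeneousComponent 1 b := by
    have h0 := homogeneousComponent_of_lt_order_eq_zero (p := m + 1)
      (lt_of_lt_of_le (by exact_mod_cast (by omega : m + 1 < m + 2)) hfg)
    rw [map_add, homogeneousComponent_mul_of_le_order (q := 1) hf
      (one_le_order_iff_constCoeff_eq_zero.2 ha), homogeneousComponent_mul_of_le_order (q := 1)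
      hg (one_le_order_iff_constCoeff_eq_zero.2 hb)] at h0
    rw [map_neg, neg_mul]
    exact eq_neg_of_add_eq_zero_left h0
  obtain ⟨H, hH, hF, hG⟩ := exists_eq_mul_of_mul_eq_mul hab
    (isHomogeneous_homogeneousComponent f m) (isHomogeneous_homogeneousComponent (-g) m) hin
  rw [map_neg] at hG
  refine ⟨f - H * b, g + H * a, by ring, ?_, ?_⟩
  · rw [show f - H * b = (f - homogeneousComponent m f) - H * (b - homogeneousComponent 1 b) by
      rw [hF]; ring]
    exact le_order_sub (le_order_sub_homogeneousComponent hf)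
      (le_order_mul_sub_homogeneousComponent_one hb hH)
  · rw [show g + H * a = (g - homogeneousComponent m g) + H * (a - homogeneousComponent 1 a) by
      linear_combination -hG]
    exact le_order_add (le_order_sub_homogeneousComponent hg)
      (le_order_mul_sub_homogeneousComponent_one ha hH)

theorem exists_mul_add_mul_eq_le_order
    (hab : LinearIndependent K ![linearCoeffs a, linearCoeffs b])
    (ha : constantCoeff a = 0) (hb : constantCoeff b = 0) (n : ℕ) {f g : MvPowerSeries σ K}
    (h : ((n + 1 : ℕ) : ℕ∞) ≤ (f * a + g * b).order) :
    ∃ f' g' : MvPowerSeries σ K, f' * a + g' * b = f * a + g * b ∧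
      (n : ℕ∞) ≤ f'.order ∧ (n : ℕ∞) ≤ g'.order := by
  induction n with
  | zero => exact ⟨f, g, rfl, by simp, by simp⟩
  | succ n ih =>
    obtain ⟨f₁, g₁, h₁, hf₁, hg₁⟩ := ih (le_trans (by exact_mod_cast (by omega)) h)
    obtain ⟨f₂, g₂, h₂, hf₂, hg₂⟩ :=
      exists_mul_add_mul_eq_succ_le_order hab ha hb hf₁ hg₁ (by rwa [h₁])
    exact ⟨f₂, g₂, h₂.trans h₁, hf₂, hg₂⟩

theorem exists_succ_le_order_sub
    (habc : LinearIndependent K ![linearCoeffs a, linearCoeffs b, linearCoeffs c])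
    (ha : constantCoeff a = 0) (hb : constantCoeff b = 0) (hc : constantCoeff c = 0) {n : ℕ}
    {r : MvPowerSeries σ K} (hr : (n : ℕ∞) ≤ r.order) (hrc : r * c ∈ Ideal.span {a, b}) :
    ∃ U V : MvPowerSeries σ K, ((n - 1 : ℕ) : ℕ∞) ≤ U.order ∧ ((n - 1 : ℕ) : ℕ∞) ≤ V.order ∧
      ((n + 1 : ℕ) : ℕ∞) ≤ (r - U * a - V * b).order := by
  have hab : LinearIndependent K ![linearCoeffs a, linearCoeffs b] := by
    convert habc.comp _ (Fin.castSucc_injective 2) using 1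
    ext i : 1
    fin_cases i <;> rfl
  have hc1 : ((1 : ℕ) : ℕ∞) ≤ c.order := one_le_order_iff_constCoeff_eq_zero.2 hc
  obtain ⟨f, g, hfg⟩ := Ideal.mem_span_pair.1 hrc
  obtain ⟨f', g', hfg', hf', hg'⟩ := exists_mul_add_mul_eq_le_order hab ha hb n (f := f) (g := g)
    (hfg ▸ le_trans (by exact_mod_cast le_rfl) (le_trans (add_le_add hr hc1) le_order_mul))
  have hin : homogeneousComponent n r * homogeneousComponent 1 c =
      homogeneousComponent n f' * homogeneousComponent 1 a +
        homogeneousComponent n g' * homogeneousComponent 1 b := by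
    rw [← homogeneousComponent_mul_of_le_order hr hc1,
      ← homogeneousComponent_mul_of_le_order (q := 1) hf'
        (one_le_order_iff_constCoeff_eq_zero.2 ha),
      ← homogeneousComponent_mul_of_le_order (q := 1) hg'
        (one_le_order_iff_constCoeff_eq_zero.2 hb), ← map_add, hfg', hfg]
  obtain ⟨U, V, hU, hV, hUV⟩ := exists_eq_mul_add_mul_of_mul_eq habc
    (isHomogeneous_homogeneousComponent r n) (isHomogeneous_homogeneousComponent f' n)
    (isHomogeneous_homogeneousComponent g' n) hin
  refine ⟨U, V, hU, hV, ?_⟩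
  rw [show r - U * a - V * b = (r - homogeneousComponent n r)
      - U * (a - homogeneousComponent 1 a) - V * (b - homogeneousComponent 1 b) by
    rw [hUV]; ring]
  exact le_order_sub (le_order_sub (le_order_sub_homogeneousComponent hr)
    (le_order_mul_sub_homogeneousComponent_one ha hU))
    (le_order_mul_sub_homogeneousComponent_one hb hV)

theorem exists_seq_le_order_sub_mul_add_mul
    (habc : LinearIndependent K ![linearCoeffs a, linearCoeffs b, linearCoeffs c])
    (ha : constantCoeff a = 0) (hb : constantCoeff b = 0) (hc : constantCoeff c = 0)
    {q : MvPowerSeries σ K} (hq : q * c ∈ Ideal.span {a, b}) :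
    ∃ s : ℕ → MvPowerSeries σ K × MvPowerSeries σ K, ∀ n : ℕ,
      (n : ℕ∞) ≤ (q - (s n).1 * a - (s n).2 * b).order ∧
      ((n - 1 : ℕ) : ℕ∞) ≤ ((s (n + 1)).1 - (s n).1).order ∧
      ((n - 1 : ℕ) : ℕ∞) ≤ ((s (n + 1)).2 - (s n).2).order := by
  have step : ∀ (n : ℕ) (p : MvPowerSeries σ K × MvPowerSeries σ K),
      ∃ p' : MvPowerSeries σ K × MvPowerSeries σ K,
        (n : ℕ∞) ≤ (q - p.1 * a - p.2 * b).order →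
          ((n - 1 : ℕ) : ℕ∞) ≤ (p'.1 - p.1).order ∧ ((n - 1 : ℕ) : ℕ∞) ≤ (p'.2 - p.2).order ∧
            ((n + 1 : ℕ) : ℕ∞) ≤ (q - p'.1 * a - p'.2 * b).order := by
    intro n p
    by_cases hn : (n : ℕ∞) ≤ (q - p.1 * a - p.2 * b).order
    · have hrc : (q - p.1 * a - p.2 * b) * c ∈ Ideal.span {a, b} := by
        rw [sub_mul, sub_mul, mul_right_comm p.1, mul_right_comm p.2]
        exact sub_mem (sub_mem hq (Ideal.mul_mem_left _ _ (Ideal.subset_span (by simp))))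
          (Ideal.mul_mem_left _ _ (Ideal.subset_span (by simp)))
      obtain ⟨U, V, hU, hV, hUV⟩ := exists_succ_le_order_sub habc ha hb hc hn hrc
      refine ⟨(p.1 + U, p.2 + V), fun _ => ⟨by simpa using hU, by simpa using hV, ?_⟩⟩
      convert hUV using 2
      ring
    · exact ⟨p, fun h => absurd h hn⟩
  choose next hnext using step
  let s : ℕ → MvPowerSeries σ K × MvPowerSeries σ K := fun n => Nat.rec (0, 0) next n
  have hs : ∀ n : ℕ, (n : ℕ∞) ≤ (q - (s n).1 * a - (s n).2 * b).order := by
    intro n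
    induction n with
    | zero => simp
    | succ n ih => exact (hnext n (s n) ih).2.2
  exact ⟨s, fun n => ⟨hs n, (hnext n (s n) (hs n)).1, (hnext n (s n) (hs n)).2.1⟩⟩

theorem mem_span_pair_of_mul_mem
    (habc : LinearIndependent K ![linearCoeffs a, linearCoeffs b, linearCoeffs c])
    (ha : constantCoeff a = 0) (hb : constantCoeff b = 0) (hc : constantCoeff c = 0)
    {q : MvPowerSeries σ K} (hq : q * c ∈ Ideal.span {a, b}) : q ∈ Ideal.span {a, b} := by
  obtain ⟨s, hs⟩ := exists_seq_le_order_sub_mul_add_mul habc ha hb hc hq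
  obtain ⟨u, hu⟩ := exists_forall_le_order_sub (x := fun n => (s (n + 1)).1)
    fun n => (hs (n + 1)).2.1
  obtain ⟨v, hv⟩ := exists_forall_le_order_sub (x := fun n => (s (n + 1)).2)
    fun n => (hs (n + 1)).2.2
  have hlim : q - u * a - v * b = 0 := by
    refine eq_zero_of_forall_le_order fun n => ?_
    rw [show q - u * a - v * b = (q - (s (n + 1)).1 * a - (s (n + 1)).2 * b)
        - (u - (s (n + 1)).1) * a - (v - (s (n + 1)).2) * b by ring]
    exact le_order_sub (le_order_sub (le_trans (by exact_mod_cast n.le_succ) (hs (n + 1)).1)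
      (le_trans (hu n) (le_trans le_self_add le_order_mul)))
      (le_trans (hv n) (le_trans le_self_add le_order_mul))
  exact Ideal.mem_span_pair.2 ⟨u, v, by linear_combination -hlim⟩

end MvPowerSeries

theorem stmt_15 (A B C : O)
    (hA0 : MvPowerSeries.constantCoeff (σ := Fin 4) (R := ZMod 2) A = 0)
    (hB0 : MvPowerSeries.constantCoeff (σ := Fin 4) (R := ZMod 2) B = 0)
    (hC0 : MvPowerSeries.constantCoeff (σ := Fin 4) (R := ZMod 2) C = 0)
    (hind : LinearIndependent (ZMod 2) ![linPart A, linPart B, linPart C]) :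
    Ideal.span {A, B} ⊓ Ideal.span {A ^ 2, C} =
      Ideal.span {A ^ 2, A * C, B * C} :=
  Ideal.span_pair_inf_span_pair_eq fun _ =>
    MvPowerSeries.mem_span_pair_of_mul_mem hind hA0 hB0 hC0
end
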